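/- Let x, x* ∈ ℝ^N with x supported on T and Ax = Ax*. Let T̃ ⊂ {1,…,N} and w ∈ [0,1], and suppose the weighted ℓ1 objective of x* is at most that of x, i.e., w‖x*_{T̃}‖₁ + ‖x*_{T̃ᶜ}‖₁ ≤ w‖x_{T̃}‖₁ + ‖x_{T̃ᶜ}‖₁. Then the vector h := x* − x satisfies ‖h_{Tᶜ}‖₁ ≤ w‖h_T‖₁ + (1−w)‖h_{T̃ ∩ Tᶜ}‖₁ + (1−w)‖h_{T̃ᶜ ∩ T}‖₁. -/
import Mathlib


open Finset

/-- ℓ1 norm of the restriction of `h` to the index set `T`. -/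
def l1 {N : ℕ} (h : Fin N → ℝ) (T : Finset (Fin N)) : ℝ := ∑ i ∈ T, |h i|

/-- The weighted null space property w-NSP(k,s,C). -/
def WNSP {m N : ℕ} (A : Matrix (Fin m) (Fin N) ℝ) (w : ℝ) (k s : ℕ) (C : ℝ) : Prop :=
  ∀ h : Fin N → ℝ, A.mulVec h = 0 →
    ∀ T S : Finset (Fin N), T.card ≤ k → S.card ≤ s →
      w * l1 h T + (1 - w) * l1 h S ≤ C * l1 h Tᶜ

/-- The weighted ℓ1 objective with weight `w` on the support estimate `Ttil`. -/
def wObj {N : ℕ} (w : ℝ) (Ttil : Finset (Fin N)) (z : Fin N → ℝ) : ℝ :=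
  w * l1 z Ttil + l1 z Ttilᶜ

/-- `x` is the unique minimizer of the weighted ℓ1 problem with measurements `A x`. -/
def UniqueMin {m N : ℕ} (A : Matrix (Fin m) (Fin N) ℝ) (w : ℝ) (Ttil : Finset (Fin N))
    (x : Fin N → ℝ) : Prop :=
  ∀ z : Fin N → ℝ, A.mulVec z = A.mulVec x → z ≠ x → wObj w Ttil x < wObj w Ttil z

/-- The support of a vector as a finset. -/
noncomputable def supp {N : ℕ} (x : Fin N → ℝ) : Finset (Fin N) := Finset.univ.filter (fun i => x i ≠ 0)

private lemma l1_split {N : ℕ} (z : Fin N → ℝ) (U V : Finset (Fin N)) :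
    l1 z U = l1 z (U ∩ V) + l1 z (U ∩ Vᶜ) := by
  rw [l1, l1, l1, ← Finset.sum_inter_add_sum_sdiff U V (fun i => |z i|), sdiff_eq]; rfl

private lemma l1_nonneg {N : ℕ} (z : Fin N → ℝ) (U : Finset (Fin N)) : 0 ≤ l1 z U :=
  Finset.sum_nonneg fun _ _ => abs_nonneg _

theorem stmt11 {m N : ℕ} (A : Matrix (Fin m) (Fin N) ℝ) (x xstar : Fin N → ℝ)
    (T : Finset (Fin N)) (hsupp : supp x ⊆ T)
    (hmeas : A.mulVec x = A.mulVec xstar)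
    (Ttil : Finset (Fin N)) (w : ℝ) (hw0 : 0 ≤ w) (hw1 : w ≤ 1)
    (hobj : w * l1 xstar Ttil + l1 xstar Ttilᶜ ≤ w * l1 x Ttil + l1 x Ttilᶜ) :
    l1 (xstar - x) Tᶜ ≤
      w * l1 (xstar - x) T + (1 - w) * l1 (xstar - x) (Ttil ∩ Tᶜ)
        + (1 - w) * l1 (xstar - x) (Ttilᶜ ∩ T) := by
  set h : Fin N → ℝ := xstar - x with hh
  have hx0 : ∀ i ∈ Tᶜ, x i = 0 := by
    intro i hi
    by_contra hne
    exact (Finset.mem_compl.mp hi) (hsupp (Finset.mem_filter.mpr ⟨Finset.mem_univ i, hne⟩))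
  -- on Tᶜ, xstar = h
  have e2 : l1 xstar (Ttil ∩ Tᶜ) = l1 h (Ttil ∩ Tᶜ) := by
    apply Finset.sum_congr rfl
    intro i hi
    have := hx0 i (Finset.mem_of_mem_inter_right hi)
    simp [hh, this]
  have e4 : l1 xstar (Ttilᶜ ∩ Tᶜ) = l1 h (Ttilᶜ ∩ Tᶜ) := by
    apply Finset.sum_congr rfl
    intro i hi
    have := hx0 i (Finset.mem_of_mem_inter_right hi)
    simp [hh, this]
  have ex2 : l1 x (Ttil ∩ Tᶜ) = 0 := by
    apply Finset.sum_eq_zero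
    intro i hi
    simp [hx0 i (Finset.mem_of_mem_inter_right hi)]
  have ex4 : l1 x (Ttilᶜ ∩ Tᶜ) = 0 := by
    apply Finset.sum_eq_zero
    intro i hi
    simp [hx0 i (Finset.mem_of_mem_inter_right hi)]
  -- reverse triangle inequality on the T-parts
  have t1 : l1 x (Ttil ∩ T) - l1 h (Ttil ∩ T) ≤ l1 xstar (Ttil ∩ T) := by
    rw [l1, l1, l1, ← Finset.sum_sub_distrib]
    apply Finset.sum_le_sum
    intro i _
    have hx : x i = xstar i - h i := by simp [hh]
    calc |x i| - |h i| ≤ |xstar i - h i| - |h i| := by rw [hx]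
      _ ≤ (|xstar i| + |h i|) - |h i| := by linarith [abs_sub (xstar i) (h i)]
      _ = |xstar i| := by ring
  have t3 : l1 x (Ttilᶜ ∩ T) - l1 h (Ttilᶜ ∩ T) ≤ l1 xstar (Ttilᶜ ∩ T) := by
    rw [l1, l1, l1, ← Finset.sum_sub_distrib]
    apply Finset.sum_le_sum
    intro i _
    have hx : x i = xstar i - h i := by simp [hh]
    calc |x i| - |h i| ≤ |xstar i - h i| - |h i| := by rw [hx]
      _ ≤ (|xstar i| + |h i|) - |h i| := by linarith [abs_sub (xstar i) (h i)]
      _ = |xstar i| := by ring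
  have t1' : w * (l1 x (Ttil ∩ T) - l1 h (Ttil ∩ T)) ≤ w * l1 xstar (Ttil ∩ T) :=
    mul_le_mul_of_nonneg_left t1 hw0
  -- splittings
  have s1 : l1 xstar Ttil = l1 xstar (Ttil ∩ T) + l1 xstar (Ttil ∩ Tᶜ) := l1_split _ _ _
  have s2 : l1 xstar Ttilᶜ = l1 xstar (Ttilᶜ ∩ T) + l1 xstar (Ttilᶜ ∩ Tᶜ) := l1_split _ _ _
  have s3 : l1 x Ttil = l1 x (Ttil ∩ T) + l1 x (Ttil ∩ Tᶜ) := l1_split _ _ _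
  have s4 : l1 x Ttilᶜ = l1 x (Ttilᶜ ∩ T) + l1 x (Ttilᶜ ∩ Tᶜ) := l1_split _ _ _
  have s5 : l1 h Tᶜ = l1 h (Tᶜ ∩ Ttil) + l1 h (Tᶜ ∩ Ttilᶜ) := l1_split _ _ _
  have s6 : l1 h T = l1 h (T ∩ Ttil) + l1 h (T ∩ Ttilᶜ) := l1_split _ _ _
  rw [Finset.inter_comm Tᶜ Ttil, Finset.inter_comm Tᶜ Ttilᶜ] at s5
  rw [Finset.inter_comm T Ttil, Finset.inter_comm T Ttilᶜ] at s6
  have n2 : 0 ≤ l1 h (Ttil ∩ Tᶜ) := l1_nonneg _ _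
  have n3 : 0 ≤ l1 h (Ttilᶜ ∩ T) := l1_nonneg _ _
  have n1 : 0 ≤ l1 h (Ttil ∩ T) := l1_nonneg _ _
  nlinarith [hobj, t1', t3, s1, s2, s3, s4, s5, s6, e2, e4, ex2, ex4, n1, n2, n3]
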